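/- arXiv:math/0305341 — 3 statements merged into one kernel-verified Lean document; each statement's English description precedes it below -/
import Mathlib

section
/- For all real numbers a and b, the integral over the real line of 1/((1+(t-a)^2)(1+(t-b)^2)) dt equals 2π/(4+(a-b)^2). -/
open Real MeasureTheory Filter Topology Bornology

/-!
Translate by `b` and write `c = a - b`, `x = t - c`, `y = t`. The identity
`(4 + c²) / ((1 + x²)(1 + y²)) = 1 / (1 + x²) + 1 / (1 + y²) + 2 (1 - x y) / ((1 + x²)(1 + y²))`
splits the integrand into two Cauchy kernels, each of integral `π`, and a cross term. The cross
term is minus the real part of `1 / ((x + i)(y + i))`, whose poles lie in the same half-plane, so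
its integral vanishes; concretely, it has the antiderivative `(log (1 + y²) - log (1 + x²)) / (2c)`
(`t / (1 + t²)` when `c = 0`), which tends to `0` at both ends of the line.
-/

noncomputable def cauchyCrossTerm (c t : ℝ) : ℝ :=
  (1 - t * (t - c)) / ((1 + t ^ 2) * (1 + (t - c) ^ 2))

lemma cauchyCrossTerm_eq (c t : ℝ) :
    cauchyCrossTerm c t =
      ((4 + c ^ 2) * (1 / ((1 + (t - c) ^ 2) * (1 + t ^ 2))) - (1 + t ^ 2)⁻¹
        - (1 + (t - c) ^ 2)⁻¹) / 2 := by
  unfold cauchyCrossTerm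
  field_simp
  ring

lemma integrable_one_div_one_add_sq_sub_mul (c : ℝ) :
    Integrable fun t : ℝ => 1 / ((1 + (t - c) ^ 2) * (1 + t ^ 2)) := by
  refine integrable_inv_one_add_sq.mono' (Measurable.aestronglyMeasurable (by fun_prop))
    (ae_of_all _ fun t => ?_)
  rw [Real.norm_of_nonneg (by positivity), one_div, mul_inv]
  exact mul_le_of_le_one_left (by positivity) (inv_le_one_of_one_le₀ (by nlinarith))

lemma integrable_cauchyCrossTerm (c : ℝ) : Integrable (cauchyCrossTerm c) := by
  simp_rw [funext (cauchyCrossTerm_eq c)]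
  exact ((((integrable_one_div_one_add_sq_sub_mul c).const_mul _).sub
    integrable_inv_one_add_sq).sub (integrable_inv_one_add_sq.comp_sub_right c)).div_const 2

lemma hasDerivAt_div_one_add_sq (t : ℝ) :
    HasDerivAt (fun t => t / (1 + t ^ 2)) (cauchyCrossTerm 0 t) t := by
  refine ((hasDerivAt_id' t).div ((hasDerivAt_pow 2 t).const_add 1)
    (by positivity)).congr_deriv ?_
  unfold cauchyCrossTerm
  field_simp
  ring

lemma hasDerivAt_log_one_add_sq_sub (c t : ℝ) :
    HasDerivAt (fun t => log (1 + (t - c) ^ 2)) (2 * (t - c) / (1 + (t - c) ^ 2)) t := by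
  refine ((((hasDerivAt_id' t).sub_const c).fun_pow 2).const_add 1
    |>.log (by positivity)).congr_deriv ?_
  ring

lemma hasDerivAt_log_one_add_sq_sub_log (c t : ℝ) :
    HasDerivAt (fun t => log (1 + t ^ 2) - log (1 + (t - c) ^ 2))
      (2 * c * cauchyCrossTerm c t) t := by
  have h := (hasDerivAt_log_one_add_sq_sub 0 t).sub (hasDerivAt_log_one_add_sq_sub c t)
  simp only [sub_zero] at h
  refine h.congr_deriv ?_
  unfold cauchyCrossTerm
  field_simp
  ring

lemma tendsto_div_one_add_sq_cobounded :
    Tendsto (fun t : ℝ => t / (1 + t ^ 2)) (cobounded ℝ) (𝓝 0) := by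
  have hcont : ContinuousAt (fun s : ℝ => s / (s ^ 2 + 1)) 0 := by
    fun_prop (disch := positivity)
  convert (hcont.tendsto.comp tendsto_inv₀_cobounded).congr' ?_ using 2
  · norm_num
  filter_upwards [eventually_ne_cobounded 0] with t ht
  simp only [Function.comp_apply]
  field_simp

lemma tendsto_log_one_add_sq_sub_log_cobounded (c : ℝ) :
    Tendsto (fun t : ℝ => log (1 + t ^ 2) - log (1 + (t - c) ^ 2)) (cobounded ℝ) (𝓝 0) := by
  have hcont : ContinuousAt (fun s : ℝ => log ((s ^ 2 + 1) / (s ^ 2 + (1 - c * s) ^ 2))) 0 := by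
    fun_prop (disch := norm_num)
  convert (hcont.tendsto.comp tendsto_inv₀_cobounded).congr' ?_ using 2
  · norm_num
  filter_upwards [eventually_ne_cobounded 0] with t ht
  rw [Function.comp_apply, ← log_div (by positivity) (by positivity)]
  congr 1
  field_simp

lemma integral_eq_zero_of_hasDerivAt_of_tendsto_cobounded {E : Type*} [NormedAddCommGroup E]
    [NormedSpace ℝ E] [CompleteSpace E] {f f' : ℝ → E} {m : E}
    (hderiv : ∀ x, HasDerivAt f (f' x) x) (hf' : Integrable f')
    (hf : Tendsto f (cobounded ℝ) (𝓝 m)) : ∫ x, f' x = 0 := by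
  rw [integral_of_hasDerivAt_of_tendsto hderiv hf'
    (hf.mono_left IsOrderBornology.atBot_le_cobounded)
    (hf.mono_left IsOrderBornology.atTop_le_cobounded), sub_self]

lemma integral_cauchyCrossTerm (c : ℝ) : ∫ t, cauchyCrossTerm c t = 0 := by
  rcases eq_or_ne c 0 with rfl | hc
  · exact integral_eq_zero_of_hasDerivAt_of_tendsto_cobounded hasDerivAt_div_one_add_sq
      (integrable_cauchyCrossTerm 0) tendsto_div_one_add_sq_cobounded
  · refine integral_eq_zero_of_hasDerivAt_of_tendsto_cobounded (fun t => ?_)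
      (integrable_cauchyCrossTerm c)
      ((tendsto_log_one_add_sq_sub_log_cobounded c).div_const (2 * c))
    refine ((hasDerivAt_log_one_add_sq_sub_log c t).div_const (2 * c)).congr_deriv ?_
    field_simp

lemma integral_one_div_one_add_sq_sub_mul (c : ℝ) :
    ∫ t : ℝ, 1 / ((1 + (t - c) ^ 2) * (1 + t ^ 2)) = 2 * π / (4 + c ^ 2) := by
  have h := integral_cauchyCrossTerm c
  simp_rw [cauchyCrossTerm_eq] at h
  rw [integral_div, integral_sub _ (integrable_inv_one_add_sq.comp_sub_right c),
    integral_sub _ integrable_inv_one_add_sq, integral_const_mul, integral_univ_inv_one_add_sq,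
    integral_sub_right_eq_self (fun t => (1 + t ^ 2)⁻¹) c, integral_univ_inv_one_add_sq] at h
  · field_simp
    linarith
  · exact (integrable_one_div_one_add_sq_sub_mul c).const_mul _
  · exact ((integrable_one_div_one_add_sq_sub_mul c).const_mul _).sub integrable_inv_one_add_sq

theorem integral_product_cauchy_kernels (a b : ℝ) :
    ∫ t : ℝ, 1 / ((1 + (t - a) ^ 2) * (1 + (t - b) ^ 2)) =
      2 * π / (4 + (a - b) ^ 2) := by
  have hshift : ∀ t : ℝ, 1 / ((1 + (t - a) ^ 2) * (1 + (t - b) ^ 2)) =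
      1 / ((1 + (t - b - (a - b)) ^ 2) * (1 + (t - b) ^ 2)) := fun t => by ring
  simp_rw [hshift]
  rw [integral_sub_right_eq_self (fun t => 1 / ((1 + (t - (a - b)) ^ 2) * (1 + t ^ 2))) b]
  exact integral_one_div_one_add_sq_sub_mul (a - b)
end

section
/- For every real number x, 2·(sin x)/x − 1 − cos x ≤ x²/6, where at x = 0 the expression 2·(sin x)/x is interpreted as 2. -/
/-!
Clearing the denominator `x`, the inequality says `x g(x) / x² ≥ 0` for
`g t = t³/6 + t + t cos t - 2 sin t`. By the half-angle formulas,
`g' t = t²/2 + 1 - cos t - t sin t = (t - sin t)²/2 + 2 sin⁴(t/2) ≥ 0`, so `g` is monotone with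
`g 0 = 0`, hence `g x` has the sign of `x`.
-/

open Real

noncomputable def sinCosGap (t : ℝ) : ℝ := t ^ 3 / 6 + t + t * cos t - 2 * sin t

lemma sq_div_two_add_one_sub_cos_sub_mul_sin (t : ℝ) :
    t ^ 2 / 2 + 1 - cos t - t * sin t = (t - sin t) ^ 2 / 2 + 2 * sin (t / 2) ^ 4 := by
  obtain ⟨u, rfl⟩ : ∃ u, t = 2 * u := ⟨t / 2, by ring⟩
  rw [mul_div_cancel_left₀ u two_ne_zero, sin_two_mul, cos_two_mul]
  linear_combination (-2 - 2 * sin u ^ 2) * sin_sq_add_cos_sq u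

lemma hasDerivAt_sinCosGap (t : ℝ) :
    HasDerivAt sinCosGap ((t - sin t) ^ 2 / 2 + 2 * sin (t / 2) ^ 4) t := by
  rw [← sq_div_two_add_one_sub_cos_sub_mul_sin]
  have h := ((((hasDerivAt_pow 3 t).div_const 6).add (hasDerivAt_id t)).add
    ((hasDerivAt_id t).mul (hasDerivAt_cos t))).sub ((hasDerivAt_sin t).const_mul 2)
  exact h.congr_deriv (by simp only [id]; ring)

lemma monotone_sinCosGap : Monotone sinCosGap :=
  monotone_of_hasDerivAt_nonneg hasDerivAt_sinCosGap fun t => by positivity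

lemma mul_sinCosGap_nonneg (x : ℝ) : 0 ≤ x * sinCosGap x := by
  have hzero : sinCosGap 0 = 0 := by simp [sinCosGap]
  rcases le_total 0 x with hx | hx
  · exact mul_nonneg hx (hzero ▸ monotone_sinCosGap hx)
  · exact mul_nonneg_of_nonpos_of_nonpos hx (hzero ▸ monotone_sinCosGap hx)

theorem two_sinc_sub_one_sub_cos_le (x : ℝ) (hx : x ≠ 0) :
    2 * Real.sin x / x - 1 - Real.cos x ≤ x ^ 2 / 6 := by
  have hgap : x ^ 2 / 6 - (2 * sin x / x - 1 - cos x) = x * sinCosGap x / x ^ 2 := by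
    field_simp
    simp only [sinCosGap]
    ring
  have hratio : 0 ≤ x * sinCosGap x / x ^ 2 := div_nonneg (mul_sinCosGap_nonneg x) (sq_nonneg x)
  linarith
end

section
/- Fix T > 0 and a finite set Γ of real numbers (the ordinates of zeta zeros in (0,T]). For x > 0 and real h, define F(x) = ∑_{γ,γ'∈Γ} cos((γ−γ')·log x)·w(γ−γ') and F_h(x) = ∑_{γ,γ'∈Γ} cos((γ−γ'−h)·log x)·w(γ−γ'−h), where w(u) = 4/(4+u²). Then F_h(x) ≤ F(x) for all x > 0 and all real h. -/
/-!
The Laplace kernel `e^{-2|t|}` has Fourier transform `w(u) = 4/(4+u²)`, so after the change of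
variable `t ↦ t + log x` every term of `F_h(x)` is `∫ e^{-2|t|} cos((γ-γ'-h)(t + log x)) dt`.
Summing under the integral, `∑_{γ,γ'} cos((γ-γ'-h)s) = cos(hs) |∑_γ e^{iγs}|² ≤ |∑_γ e^{iγs}|²`,
and the right-hand side is the integrand of `F(x)`; the kernel is nonnegative.
-/

open Real Finset MeasureTheory Set
open scoped Complex

section LaplaceKernel

variable {c : ℝ}

lemma exp_neg_mul_abs_mul_cexp_eqOn_Iic (c a : ℝ) :
    EqOn (fun t : ℝ => (rexp (-(c * |t|)) : ℂ) * cexp (a * t * Complex.I))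
      (fun t : ℝ => cexp ((c + a * Complex.I) * t)) (Iic 0) := by
  intro t ht
  simp only [abs_of_nonpos (mem_Iic.mp ht), Complex.ofReal_exp, ← Complex.exp_add]
  push_cast
  ring_nf

lemma exp_neg_mul_abs_mul_cexp_eqOn_Ioi (c a : ℝ) :
    EqOn (fun t : ℝ => (rexp (-(c * |t|)) : ℂ) * cexp (a * t * Complex.I))
      (fun t : ℝ => cexp ((-c + a * Complex.I) * t)) (Ioi 0) := by
  intro t ht
  simp only [abs_of_pos (mem_Ioi.mp ht), Complex.ofReal_exp, ← Complex.exp_add]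
  push_cast
  ring_nf

lemma integrable_exp_neg_mul_abs_mul_cexp (hc : 0 < c) (a : ℝ) :
    Integrable fun t : ℝ => (rexp (-(c * |t|)) : ℂ) * cexp (a * t * Complex.I) := by
  have hIic := (integrableOn_exp_mul_complex_Iic (a := c + a * Complex.I) (by simpa using hc)
    0).congr_fun (exp_neg_mul_abs_mul_cexp_eqOn_Iic c a).symm measurableSet_Iic
  have hIoi := (integrableOn_exp_mul_complex_Ioi (a := -c + a * Complex.I) (by simpa using hc)
    0).congr_fun (exp_neg_mul_abs_mul_cexp_eqOn_Ioi c a).symm measurableSet_Ioi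
  simpa using hIic.union hIoi

lemma integrable_exp_neg_mul_abs (hc : 0 < c) : Integrable fun t : ℝ => rexp (-(c * |t|)) := by
  simpa [Complex.norm_exp] using (integrable_exp_neg_mul_abs_mul_cexp hc 0).norm

theorem integral_exp_neg_mul_abs_mul_cexp (hc : 0 < c) (a : ℝ) :
    ∫ t : ℝ, (rexp (-(c * |t|)) : ℂ) * cexp (a * t * Complex.I) =
      ((2 * c / (c ^ 2 + a ^ 2) : ℝ) : ℂ) := by
  have hre₁ : 0 < (c + a * Complex.I).re := by simpa using hc
  have hre₂ : (-c + a * Complex.I).re < 0 := by simpa using hc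
  have hint := integrable_exp_neg_mul_abs_mul_cexp hc a
  rw [← intervalIntegral.integral_Iic_add_Ioi hint.integrableOn hint.integrableOn,
    setIntegral_congr_fun measurableSet_Iic (exp_neg_mul_abs_mul_cexp_eqOn_Iic c a),
    setIntegral_congr_fun measurableSet_Ioi (exp_neg_mul_abs_mul_cexp_eqOn_Ioi c a),
    integral_exp_mul_complex_Iic hre₁, integral_exp_mul_complex_Ioi hre₂]
  have h₁ : c + a * Complex.I ≠ 0 := fun h => by simp [h] at hre₁
  have h₂ : -c + a * Complex.I ≠ 0 := fun h => by simp [h] at hre₂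
  have h₃ : ((c ^ 2 + a ^ 2 : ℝ) : ℂ) ≠ 0 := by exact_mod_cast (by positivity : c ^ 2 + a ^ 2 ≠ 0)
  push_cast at h₃ ⊢
  field_simp
  ring_nf
  simp [Complex.I_sq]

theorem integral_exp_neg_mul_abs_mul_cos (hc : 0 < c) (a θ : ℝ) :
    ∫ t : ℝ, rexp (-(c * |t|)) * cos (a * (t + θ)) = cos (a * θ) * (2 * c / (c ^ 2 + a ^ 2)) := by
  have hre : ∀ t : ℝ, rexp (-(c * |t|)) * cos (a * (t + θ)) =
      ((rexp (-(c * |t|)) : ℂ) * cexp (a * t * Complex.I) * cexp ((a * θ : ℝ) * Complex.I)).re := by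
    intro t
    rw [mul_assoc, ← Complex.exp_add, Complex.re_ofReal_mul,
      show (a : ℂ) * t * Complex.I + (a * θ : ℝ) * Complex.I =
        ((a * (t + θ) : ℝ) : ℂ) * Complex.I by push_cast; ring, Complex.exp_ofReal_mul_I_re]
  simp_rw [hre, ← RCLike.re_to_complex]
  rw [integral_re ((integrable_exp_neg_mul_abs_mul_cexp hc a).mul_const _), integral_mul_const,
    integral_exp_neg_mul_abs_mul_cexp hc, RCLike.re_to_complex, Complex.re_ofReal_mul,
    Complex.exp_ofReal_mul_I_re, mul_comm]

end LaplaceKernel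

theorem sum_sum_cos_sub_sub (Γ : Finset ℝ) (h s : ℝ) :
    ∑ γ ∈ Γ, ∑ γ' ∈ Γ, cos ((γ - γ' - h) * s) =
      cos (h * s) * ((∑ γ ∈ Γ, cos (γ * s)) ^ 2 + (∑ γ ∈ Γ, sin (γ * s)) ^ 2) := by
  have hexpand : ∀ γ γ' : ℝ, cos ((γ - γ' - h) * s) =
      (cos (h * s) * cos (γ * s) + sin (h * s) * sin (γ * s)) * cos (γ' * s) +
        (cos (h * s) * sin (γ * s) - sin (h * s) * cos (γ * s)) * sin (γ' * s) := by
    intro γ γ'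
    rw [show (γ - γ' - h) * s = (γ * s - h * s) - γ' * s by ring, cos_sub, cos_sub, sin_sub]
    ring
  simp_rw [hexpand, sum_add_distrib, ← mul_sum, ← sum_mul, sum_add_distrib, sum_sub_distrib,
    ← mul_sum]
  ring

theorem sum_sum_cos_sub_sub_le (Γ : Finset ℝ) (h s : ℝ) :
    ∑ γ ∈ Γ, ∑ γ' ∈ Γ, cos ((γ - γ' - h) * s) ≤ ∑ γ ∈ Γ, ∑ γ' ∈ Γ, cos ((γ - γ') * s) := by
  have h₀ := sum_sum_cos_sub_sub Γ 0 s
  simp only [sub_zero, zero_mul, cos_zero, one_mul] at h₀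
  rw [sum_sum_cos_sub_sub, h₀]
  exact mul_le_of_le_one_left (by positivity) (cos_le_one _)

theorem sum_sum_integral_mul_cos_sub_sub_le {K : ℝ → ℝ} (hK : 0 ≤ K) (hKi : Integrable K)
    (Γ : Finset ℝ) (h θ : ℝ) :
    ∑ γ ∈ Γ, ∑ γ' ∈ Γ, ∫ t, K t * cos ((γ - γ' - h) * (t + θ)) ≤
      ∑ γ ∈ Γ, ∑ γ' ∈ Γ, ∫ t, K t * cos ((γ - γ') * (t + θ)) := by
  have hint : ∀ a : ℝ, Integrable fun t => K t * cos (a * (t + θ)) := fun a =>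
    hKi.mul_bdd (by fun_prop) (.of_forall fun t => by simpa using abs_cos_le_one _)
  have hint₂ : ∀ b : ℝ,
      Integrable fun t => ∑ γ ∈ Γ, ∑ γ' ∈ Γ, K t * cos ((γ - γ' - b) * (t + θ)) :=
    fun b => integrable_finsetSum _ fun γ _ => integrable_finsetSum _ fun γ' _ => hint _
  have hswap : ∀ b : ℝ, ∑ γ ∈ Γ, ∑ γ' ∈ Γ, ∫ t, K t * cos ((γ - γ' - b) * (t + θ)) =
      ∫ t, ∑ γ ∈ Γ, ∑ γ' ∈ Γ, K t * cos ((γ - γ' - b) * (t + θ)) := fun b => by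
    rw [integral_finsetSum _ fun γ _ => integrable_finsetSum _ fun γ' _ => hint _]
    exact sum_congr rfl fun γ _ => (integral_finsetSum _ fun γ' _ => hint _).symm
  have hswap₀ := hswap 0
  simp only [sub_zero] at hswap₀
  rw [hswap, hswap₀]
  refine integral_mono (hint₂ h) (by simpa using hint₂ 0) fun t => ?_
  simp only [← mul_sum]
  exact mul_le_mul_of_nonneg_left (sum_sum_cos_sub_sub_le Γ h (t + θ)) (hK t)

theorem Fh_le_F_general (Γ : Finset ℝ) (h x : ℝ) :
    (∑ γ ∈ Γ, ∑ γ' ∈ Γ,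
        Real.cos ((γ - γ' - h) * Real.log x) * (4 / (4 + (γ - γ' - h) ^ 2))) ≤
      ∑ γ ∈ Γ, ∑ γ' ∈ Γ,
        Real.cos ((γ - γ') * Real.log x) * (4 / (4 + (γ - γ') ^ 2)) := by
  have hw : ∀ a : ℝ, cos (a * log x) * (4 / (4 + a ^ 2)) =
      ∫ t, rexp (-(2 * |t|)) * cos (a * (t + log x)) := by
    intro a
    rw [integral_exp_neg_mul_abs_mul_cos two_pos]
    norm_num
  simp only [hw]
  exact sum_sum_integral_mul_cos_sub_sub_le (fun t => (exp_pos _).le)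
    (integrable_exp_neg_mul_abs two_pos) Γ h (log x)

theorem Fh_le_F (Γ : Finset ℝ) (h x : ℝ) (hx : 0 < x) :
    (∑ γ ∈ Γ, ∑ γ' ∈ Γ,
        Real.cos ((γ - γ' - h) * Real.log x) * (4 / (4 + (γ - γ' - h) ^ 2))) ≤
      ∑ γ ∈ Γ, ∑ γ' ∈ Γ,
        Real.cos ((γ - γ') * Real.log x) * (4 / (4 + (γ - γ') ^ 2)) :=
  Fh_le_F_general Γ h x
end
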